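/- Let A, B be positive semidefinite matrices and let P be a nonzero positive semidefinite matrix whose support is contained in supp(A) ∩ supp(B) and in an eigenspace of the generalized geometric mean M(A,B) with eigenvalue λ. Then λ > 0 and the support of P is contained in the eigenspace of M(B⁺, A⁺) with eigenvalue 1/λ. -/

import Mathlib

open scoped ComplexOrder

open Classical in
open scoped MatrixOrder in
/-- The unique positive semidefinite square root of a positive semidefinite matrix
(junk value 0 otherwise). -/
noncomputable def psqrt {n : Type*} [Fintype n] [DecidableEq n] (X : Matrix n n ℂ) :
    Matrix n n ℂ :=
  if h : X.PosSemidef then CFC.sqrt X else 0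

/-- The range (support) of a matrix, i.e. the orthogonal complement of its kernel. -/
noncomputable def msupp {n : Type*} [Fintype n] [DecidableEq n] (X : Matrix n n ℂ) :
    Submodule ℂ (EuclideanSpace ℂ n) :=
  (LinearMap.ker (Matrix.toEuclideanLin X))ᗮ

/-- The kernel of a matrix, as a subspace of Euclidean space. -/
noncomputable def mker {n : Type*} [Fintype n] [DecidableEq n] (X : Matrix n n ℂ) :
    Submodule ℂ (EuclideanSpace ℂ n) :=
  LinearMap.ker (Matrix.toEuclideanLin X)

/-- The generalized geometric mean M(A,B) = √A · √(√(A⁺) B √(A⁺)) · √A, where Ap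
stands for the Moore–Penrose pseudoinverse A⁺ of A. -/
noncomputable def geoMean {n : Type*} [Fintype n] [DecidableEq n]
    (A Ap B : Matrix n n ℂ) : Matrix n n ℂ :=
  psqrt A * psqrt (psqrt Ap * B * psqrt Ap) * psqrt A

open Matrix in
/-- `Ap` is the Moore–Penrose pseudoinverse of `A` (the four Penrose conditions). -/
def IsMPInv {n : Type*} [Fintype n] [DecidableEq n] (A Ap : Matrix n n ℂ) : Prop :=
  A * Ap * A = A ∧ Ap * A * Ap = Ap ∧ (A * Ap)ᴴ = A * Ap ∧ (Ap * A)ᴴ = Ap * A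

/-!
Write `a = √A`, `a' = √A⁺`, `b = √B`, `b' = √B⁺` and `T = a' b`, so that
`M(A, B) = a √(T Tᴴ) a` and `M(B⁺, A⁺) = b' √(Tᴴ T) b'`, while `a' a = A A⁺` and `b' b = B B⁺`
are the projections onto `supp A` and `supp B`. Let `x ∈ supp A ∩ supp B` with
`M(A, B) x = λ x`. Applying `a'` and then `√(T Tᴴ)` gives `a' B x = λ √(T Tᴴ) a' x`.
If `λ = 0` this gives `A A⁺ B x = 0`, so `⟪x, B x⟫ = 0` and `B x = 0`, impossible for
`x ≠ 0` in `supp B`; and `λ ≥ 0` since `M(A, B) ≥ 0`. For `λ ≠ 0` the intertwining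
`√(T Tᴴ) T = T √(Tᴴ T)` turns the identity into `T (√(Tᴴ T) b' x) = T (Tᴴ (λ⁻¹ a x))`.
As `T` is injective on `range √(Tᴴ T) + range Tᴴ = range Tᴴ`, this yields
`√(Tᴴ T) b' x = λ⁻¹ b x`, hence `M(B⁺, A⁺) x = λ⁻¹ b' b x = λ⁻¹ x`.
-/

open Matrix

section Psqrt

variable {m n : Type*} [Fintype m] [DecidableEq m] [Fintype n] [DecidableEq n]

open scoped MatrixOrder in
theorem psqrt_eq_sqrt {X : Matrix n n ℂ} (hX : X.PosSemidef) : psqrt X = CFC.sqrt X :=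
  dif_pos hX

theorem psqrt_of_not_posSemidef {X : Matrix n n ℂ} (hX : ¬X.PosSemidef) : psqrt X = 0 :=
  dif_neg hX

open scoped MatrixOrder in
theorem posSemidef_psqrt (X : Matrix n n ℂ) : (psqrt X).PosSemidef := by
  by_cases hX : X.PosSemidef
  · rw [psqrt_eq_sqrt hX]
    exact (CFC.sqrt_nonneg X).posSemidef
  · rw [psqrt_of_not_posSemidef hX]
    exact .zero

theorem isHermitian_psqrt (X : Matrix n n ℂ) : (psqrt X).IsHermitian :=
  (posSemidef_psqrt X).isHermitian

open scoped MatrixOrder in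
theorem psqrt_mul_psqrt_self {X : Matrix n n ℂ} (hX : X.PosSemidef) : psqrt X * psqrt X = X := by
  rw [psqrt_eq_sqrt hX]
  exact CFC.sqrt_mul_sqrt_self X hX.nonneg

open scoped MatrixOrder in
theorem psqrt_mul_self {Y : Matrix n n ℂ} (hY : Y.PosSemidef) : psqrt (Y * Y) = Y := by
  have hYY : (Y * Y).PosSemidef := by
    simpa [hY.isHermitian.eq] using posSemidef_conjTranspose_mul_self Y
  rw [psqrt_eq_sqrt hYY]
  exact CFC.sqrt_mul_self Y hY.nonneg

open scoped MatrixOrder in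
theorem Commute.psqrt_right {X Y : Matrix n n ℂ} (h : Commute Y X) : Commute Y (psqrt X) := by
  by_cases hX : X.PosSemidef
  · rw [psqrt_eq_sqrt hX]
    exact (h.symm.cfcₙ_nnreal NNReal.sqrt).symm
  · rw [psqrt_of_not_posSemidef hX]
    exact .zero_right Y

theorem IsStarProjection.mul_psqrt_of_mul_eq {Q X : Matrix n n ℂ} (hQ : IsStarProjection Q)
    (h : Q * X = X) : Q * psqrt X = psqrt X := by
  by_cases hX : X.PosSemidef
  swap
  · rw [psqrt_of_not_posSemidef hX, mul_zero]
  set s := psqrt X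
  have hR : IsStarProjection (1 - Q) := hQ.one_sub
  have hRX : (1 - Q) * X = 0 := by rw [sub_mul, h, one_mul, sub_self]
  have hRX_comm : Commute (1 - Q) X := by
    have := congrArg conjTranspose hRX
    rw [conjTranspose_mul, hX.isHermitian.eq, ← star_eq_conjTranspose, hR.isSelfAdjoint.star_eq,
      conjTranspose_zero] at this
    rw [Commute, SemiconjBy, hRX, this]
  have hRs : ((1 - Q) * s)ᴴ * ((1 - Q) * s) = 0 := by
    rw [conjTranspose_mul, (isHermitian_psqrt X).eq, ← star_eq_conjTranspose,
      hR.isSelfAdjoint.star_eq, ← mul_assoc, mul_assoc s, hR.isIdempotentElem.eq,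
      ← hRX_comm.psqrt_right.eq, mul_assoc, psqrt_mul_psqrt_self hX, hRX]
  rw [conjTranspose_mul_self_eq_zero, sub_mul, one_mul, sub_eq_zero] at hRs
  exact hRs.symm

theorem posSemidef_fromBlocks_zero {X : Matrix n n ℂ} {Y : Matrix m m ℂ}
    (hX : X.PosSemidef) (hY : Y.PosSemidef) : (fromBlocks X 0 0 Y).PosSemidef := by
  have h : fromBlocks X 0 0 Y = (fromBlocks (psqrt X) 0 0 (psqrt Y))ᴴ *
      fromBlocks (psqrt X) 0 0 (psqrt Y) := by
    simp [fromBlocks_conjTranspose, fromBlocks_multiply, (isHermitian_psqrt _).eq,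
      psqrt_mul_psqrt_self hX, psqrt_mul_psqrt_self hY]
  rw [h]
  exact posSemidef_conjTranspose_mul_self _

/-- Block-matrix trick: `psqrt` of `H ^ 2` commutes with `H = [[0, Tᴴ], [T, 0]]`, and
`H ^ 2` is block diagonal with blocks `Tᴴ * T` and `T * Tᴴ`. -/
theorem psqrt_self_mul_conjTranspose_mul (T : Matrix m n ℂ) :
    psqrt (T * Tᴴ) * T = T * psqrt (Tᴴ * T) := by
  set H : Matrix (n ⊕ m) (n ⊕ m) ℂ := fromBlocks 0 Tᴴ T 0
  set W := fromBlocks (psqrt (Tᴴ * T)) 0 0 (psqrt (T * Tᴴ))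
  have hW : psqrt (H * H) = W := by
    have hWW : W * W = H * H := by
      simp [W, H, fromBlocks_multiply,
        psqrt_mul_psqrt_self (posSemidef_conjTranspose_mul_self T),
        psqrt_mul_psqrt_self (posSemidef_self_mul_conjTranspose T)]
    rw [← hWW,
      psqrt_mul_self (posSemidef_fromBlocks_zero (posSemidef_psqrt _) (posSemidef_psqrt _))]
  have hHW : Commute H W := hW ▸ ((Commute.refl H).mul_right (Commute.refl H)).psqrt_right
  ext i j
  simpa [H, W, fromBlocks_multiply] using
    (congrFun (congrFun hHW.eq (Sum.inr i)) (Sum.inl j)).symm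

end Psqrt

theorem psqrt_conjTranspose_mul_self_mulVec_eq {m n : Type*} [Fintype m] [Fintype n]
    [DecidableEq n] {T : Matrix m n ℂ} {u : n → ℂ} {w : m → ℂ}
    (h : T *ᵥ (psqrt (Tᴴ * T) *ᵥ u) = T *ᵥ (Tᴴ *ᵥ w)) :
    psqrt (Tᴴ * T) *ᵥ u = Tᴴ *ᵥ w := by
  set D := psqrt (Tᴴ * T)
  set z := D *ᵥ u - Tᴴ *ᵥ w
  have hDh : Dᴴ = D := (isHermitian_psqrt _).eq
  have hTz : T *ᵥ z = 0 := by rw [mulVec_sub, h, sub_self]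
  have hDz : D *ᵥ z = 0 := by
    rw [← conjTranspose_mul_self_mulVec_eq_zero, hDh,
      psqrt_mul_psqrt_self (posSemidef_conjTranspose_mul_self T),
      conjTranspose_mul_self_mulVec_eq_zero, hTz]
  have hzz : star z ⬝ᵥ z = 0 := by
    calc star z ⬝ᵥ z = star z ⬝ᵥ (D *ᵥ u) - star z ⬝ᵥ (Tᴴ *ᵥ w) := dotProduct_sub _ _ _
      _ = star (D *ᵥ z) ⬝ᵥ u - star (T *ᵥ z) ⬝ᵥ w := by
        rw [dotProduct_mulVec, dotProduct_mulVec, star_mulVec, star_mulVec, hDh]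
      _ = 0 := by simp [hDz, hTz]
  exact sub_eq_zero.mp (dotProduct_star_self_eq_zero.mp hzz)

open scoped MatrixOrder Matrix.Norms.L2Operator in
theorem Commute.posSemidef_mul {n : Type*} [Fintype n] [DecidableEq n] {X Y : Matrix n n ℂ}
    (h : Commute X Y) (hX : X.PosSemidef) (hY : Y.PosSemidef) : (X * Y).PosSemidef :=
  (h.mul_nonneg hX.nonneg hY.nonneg).posSemidef

namespace IsMPInv

variable {n : Type*} [Fintype n] [DecidableEq n] {A Ap : Matrix n n ℂ}

theorem conjTranspose (h : IsMPInv A Ap) : IsMPInv Aᴴ Apᴴ := by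
  obtain ⟨h1, h2, h3, h4⟩ := h
  refine ⟨?_, ?_, ?_, ?_⟩
  · conv_rhs => rw [← h1]
    simp only [conjTranspose_mul, mul_assoc]
  · conv_rhs => rw [← h2]
    simp only [conjTranspose_mul, mul_assoc]
  · rw [← conjTranspose_mul, h4, h4]
  · rw [← conjTranspose_mul, h3, h3]

theorem unique {X Y : Matrix n n ℂ} (hX : IsMPInv A X) (hY : IsMPInv A Y) : X = Y := by
  obtain ⟨hx1, hx2, hx3, hx4⟩ := hX
  obtain ⟨hy1, hy2, hy3, hy4⟩ := hY
  have hXAY : X = X * A * Y :=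
    calc X = X * (A * X)ᴴ := by rw [hx3, ← mul_assoc, hx2]
      _ = X * (A * Y * A * X)ᴴ := by rw [hy1]
      _ = X * (A * X)ᴴ * (A * Y)ᴴ := by simp only [conjTranspose_mul, mul_assoc]
      _ = X * A * Y := by rw [hx3, hy3, ← mul_assoc X A X, hx2, mul_assoc]
  have hYAY : Y = X * A * Y :=
    calc Y = (Y * A)ᴴ * Y := by rw [hy4, hy2]
      _ = (Y * (A * X * A))ᴴ * Y := by rw [hx1]
      _ = (X * A)ᴴ * (Y * A)ᴴ * Y := by simp only [conjTranspose_mul, mul_assoc]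
      _ = X * A * Y := by rw [hx4, hy4, mul_assoc (X * A), hy2]
  rw [hXAY, ← hYAY]

theorem isHermitian (hA : A.IsHermitian) (h : IsMPInv A Ap) : Ap.IsHermitian :=
  ((hA.eq ▸ h.conjTranspose : IsMPInv A Apᴴ).unique h)

theorem posSemidef (hA : A.PosSemidef) (h : IsMPInv A Ap) : Ap.PosSemidef := by
  have hAp : Apᴴ * A * Ap = Ap := by rw [(h.isHermitian hA.isHermitian).eq, h.2.1]
  simpa only [hAp] using hA.conjTranspose_mul_mul_same Ap

theorem commute (hA : A.IsHermitian) (h : IsMPInv A Ap) : Commute A Ap := by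
  calc A * Ap = (A * Ap)ᴴ := h.2.2.1.symm
    _ = Ap * A := by rw [conjTranspose_mul, hA.eq, (h.isHermitian hA).eq]

theorem isStarProjection (h : IsMPInv A Ap) : IsStarProjection (A * Ap) :=
  ⟨by rw [IsIdempotentElem, ← mul_assoc, h.1], h.2.2.1⟩

theorem mul_mul_pinv (hA : A.IsHermitian) (h : IsMPInv A Ap) : A * Ap * Ap = Ap := by
  rw [(h.commute hA).eq, h.2.1]

theorem commute_psqrt (hA : A.IsHermitian) (h : IsMPInv A Ap) : Commute (psqrt A) (psqrt Ap) :=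
  ((h.commute hA).psqrt_right.symm.psqrt_right).symm

theorem psqrt_mul_psqrt (hA : A.PosSemidef) (h : IsMPInv A Ap) :
    psqrt A * psqrt Ap = A * Ap := by
  have hAp := h.posSemidef hA
  have hcomm := h.commute_psqrt hA.isHermitian
  have hsq : psqrt A * psqrt Ap * (psqrt A * psqrt Ap) = A * Ap * (A * Ap) := by
    rw [hcomm.symm.mul_mul_mul_comm, psqrt_mul_psqrt_self hA, psqrt_mul_psqrt_self hAp,
      h.isStarProjection.isIdempotentElem.eq]
  have hP : (A * Ap).PosSemidef := by
    simpa only [h.2.2.1, h.isStarProjection.isIdempotentElem.eq] using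
      posSemidef_conjTranspose_mul_self (A * Ap)
  rw [← psqrt_mul_self (hcomm.posSemidef_mul (posSemidef_psqrt A) (posSemidef_psqrt Ap)), hsq,
    psqrt_mul_self hP]

theorem psqrt_pinv_mul_psqrt (hA : A.PosSemidef) (h : IsMPInv A Ap) :
    psqrt Ap * psqrt A = A * Ap := by
  rw [← (h.commute_psqrt hA.isHermitian).eq, h.psqrt_mul_psqrt hA]

end IsMPInv

section Support

variable {n : Type*} [Fintype n] [DecidableEq n]

theorem msupp_eq_range {X : Matrix n n ℂ} (hX : X.IsHermitian) :
    msupp X = LinearMap.range (toEuclideanLin X) := by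
  rw [msupp, LinearMap.orthogonal_ker, ← toEuclideanLin_conjTranspose_eq_adjoint, hX.eq]

theorem mem_mker_sub_smul_one_iff {X : Matrix n n ℂ} {μ : ℂ} {v : EuclideanSpace ℂ n} :
    v ∈ mker (X - μ • 1) ↔ X *ᵥ v.ofLp = μ • v.ofLp := by
  rw [mker, LinearMap.mem_ker, ← WithLp.ofLp_eq_zero, ofLp_toLpLin, toLin'_apply, sub_mulVec,
    smul_mulVec, one_mulVec, sub_eq_zero]

theorem mulVec_ofLp_ne_zero_of_mem_msupp {X : Matrix n n ℂ} {v : EuclideanSpace ℂ n}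
    (hv : v ∈ msupp X) (hv0 : v ≠ 0) : X *ᵥ v.ofLp ≠ 0 := by
  refine fun hXv => hv0 (Submodule.disjoint_def.mp (Submodule.orthogonal_disjoint _) v ?_ hv)
  rw [LinearMap.mem_ker, ← WithLp.ofLp_eq_zero, ofLp_toLpLin, toLin'_apply, hXv]

theorem exists_mem_msupp_ne_zero {P : Matrix n n ℂ} (hP : P ≠ 0) : ∃ v ∈ msupp P, v ≠ 0 := by
  rw [← Submodule.ne_bot_iff, msupp, Ne, Submodule.orthogonal_eq_bot_iff, LinearMap.ker_eq_top,
    LinearEquiv.map_eq_zero_iff]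
  exact hP

theorem IsMPInv.mulVec_ofLp_of_mem_msupp {A Ap : Matrix n n ℂ} (hA : A.IsHermitian)
    (h : IsMPInv A Ap) {v : EuclideanSpace ℂ n} (hv : v ∈ msupp A) :
    (A * Ap) *ᵥ v.ofLp = v.ofLp := by
  obtain ⟨w, rfl⟩ := (msupp_eq_range hA).le hv
  rw [ofLp_toLpLin, toLin'_apply, mulVec_mulVec, h.1]

end Support

section GeoMean

variable {n : Type*} [Fintype n] [DecidableEq n] {A Ap B Bp : Matrix n n ℂ}

theorem posSemidef_geoMean (A Ap B : Matrix n n ℂ) : (geoMean A Ap B).PosSemidef := by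
  have h := (posSemidef_psqrt (psqrt Ap * B * psqrt Ap)).conjTranspose_mul_mul_same (psqrt A)
  rwa [(isHermitian_psqrt A).eq] at h

theorem IsMPInv.mul_psqrt_psqrt_mul_mul_psqrt (hA : A.IsHermitian) (h : IsMPInv A Ap)
    (B : Matrix n n ℂ) :
    A * Ap * psqrt (psqrt Ap * B * psqrt Ap) = psqrt (psqrt Ap * B * psqrt Ap) := by
  refine h.isStarProjection.mul_psqrt_of_mul_eq ?_
  rw [← mul_assoc, ← mul_assoc, h.isStarProjection.mul_psqrt_of_mul_eq (h.mul_mul_pinv hA)]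

theorem psqrt_pinv_mul_mulVec_eq_of_geoMean_mulVec (hA : A.PosSemidef) (hB : B.PosSemidef)
    (hAp : IsMPInv A Ap) {μ : ℂ} {x : n → ℂ} (hxA : (A * Ap) *ᵥ x = x)
    (hx : geoMean A Ap B *ᵥ x = μ • x) :
    (psqrt Ap * B) *ᵥ x = μ • ((psqrt (psqrt Ap * B * psqrt Ap) * psqrt Ap) *ᵥ x) := by
  set a := psqrt A
  set a' := psqrt Ap
  set C := psqrt (a' * B * a')
  have ha' : a'ᴴ = a' := (isHermitian_psqrt Ap).eq
  have hC : C * C = a' * B * a' := by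
    refine psqrt_mul_psqrt_self ?_
    simpa only [ha'] using hB.conjTranspose_mul_mul_same a'
  have ha'G : a' * geoMean A Ap B = C * a := by
    rw [geoMean, ← mul_assoc, ← mul_assoc, hAp.psqrt_pinv_mul_psqrt hA,
      hAp.mul_psqrt_psqrt_mul_mul_psqrt hA.isHermitian]
  calc (a' * B) *ᵥ x = (a' * B * (a' * a)) *ᵥ x := by
        rw [hAp.psqrt_pinv_mul_psqrt hA, ← mulVec_mulVec x (a' * B), hxA]
    _ = C *ᵥ (a' *ᵥ (geoMean A Ap B *ᵥ x)) := by
        rw [mulVec_mulVec, mulVec_mulVec, mul_assoc C, ha'G, ← mul_assoc C C, hC]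
        simp only [mul_assoc]
    _ = μ • ((C * a') *ᵥ x) := by rw [hx, mulVec_smul, mulVec_smul, mulVec_mulVec]

theorem pos_of_geoMean_mulVec_eq_smul (hA : A.PosSemidef) (hB : B.PosSemidef)
    (hAp : IsMPInv A Ap) {lam : ℝ} {x : n → ℂ} (hxA : (A * Ap) *ᵥ x = x) (hBx : B *ᵥ x ≠ 0)
    (hx : geoMean A Ap B *ᵥ x = (lam : ℂ) • x) : 0 < lam := by
  have hx0 : x ≠ 0 := by
    rintro rfl
    exact hBx (mulVec_zero B)
  have hlam : 0 ≤ lam := by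
    by_contra! hneg
    have h := (posSemidef_geoMean A Ap B).dotProduct_mulVec_nonneg x
    rw [hx, dotProduct_smul, smul_eq_mul] at h
    have hpos : 0 < star x ⬝ᵥ x := dotProduct_star_self_pos_iff.mpr hx0
    exact h.not_gt (mul_neg_of_neg_of_pos (by exact_mod_cast hneg) hpos)
  refine hlam.lt_of_ne' fun hlam0 => hBx ?_
  have ha'B : (psqrt Ap * B) *ᵥ x = 0 := by
    simpa [hlam0] using psqrt_pinv_mul_mulVec_eq_of_geoMean_mulVec hA hB hAp hxA hx
  have hPB : (A * Ap) *ᵥ (B *ᵥ x) = 0 := by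
    rw [← hAp.psqrt_mul_psqrt hA, mulVec_mulVec, mul_assoc, ← mulVec_mulVec, ha'B, mulVec_zero]
  rw [← hB.dotProduct_mulVec_zero_iff]
  calc star x ⬝ᵥ (B *ᵥ x) = star ((A * Ap) *ᵥ x) ⬝ᵥ (B *ᵥ x) := by rw [hxA]
    _ = star x ⬝ᵥ ((A * Ap) *ᵥ (B *ᵥ x)) := by rw [star_mulVec, ← dotProduct_mulVec, hAp.2.2.1]
    _ = 0 := by rw [hPB, dotProduct_zero]

theorem geoMean_mulVec_eq_inv_smul (hA : A.PosSemidef) (hB : B.PosSemidef)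
    (hAp : IsMPInv A Ap) (hBp : IsMPInv B Bp) {μ : ℂ} (hμ : μ ≠ 0) {x : n → ℂ}
    (hxA : (A * Ap) *ᵥ x = x) (hxB : (B * Bp) *ᵥ x = x) (hx : geoMean A Ap B *ᵥ x = μ • x) :
    geoMean Bp B Ap *ᵥ x = μ⁻¹ • x := by
  set T := psqrt Ap * psqrt B
  have hT : Tᴴ = psqrt B * psqrt Ap := by
    rw [conjTranspose_mul, (isHermitian_psqrt B).eq, (isHermitian_psqrt Ap).eq]
  have hTT : T * Tᴴ = psqrt Ap * B * psqrt Ap := by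
    rw [hT]
    simp only [T, mul_assoc]
    rw [← mul_assoc (psqrt B), psqrt_mul_psqrt_self hB]
  have hTT' : Tᴴ * T = psqrt B * Ap * psqrt B := by
    rw [hT]
    simp only [T, mul_assoc]
    rw [← mul_assoc (psqrt Ap), psqrt_mul_psqrt_self (hAp.posSemidef hA)]
  have key : psqrt (Tᴴ * T) *ᵥ (psqrt Bp *ᵥ x) = Tᴴ *ᵥ (μ⁻¹ • (psqrt A *ᵥ x)) := by
    refine psqrt_conjTranspose_mul_self_mulVec_eq ?_
    calc T *ᵥ (psqrt (Tᴴ * T) *ᵥ (psqrt Bp *ᵥ x))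
      _ = (psqrt (T * Tᴴ) * psqrt Ap) *ᵥ ((B * Bp) *ᵥ x) := by
        rw [mulVec_mulVec, mulVec_mulVec, mulVec_mulVec, ← psqrt_self_mul_conjTranspose_mul,
          ← hBp.psqrt_mul_psqrt hB]
        simp only [T, mul_assoc]
      _ = μ⁻¹ • ((psqrt Ap * B) *ᵥ x) := by
        rw [hxB, hTT, psqrt_pinv_mul_mulVec_eq_of_geoMean_mulVec hA hB hAp hxA hx, smul_smul,
          inv_mul_cancel₀ hμ, one_smul]
      _ = T *ᵥ (Tᴴ *ᵥ (μ⁻¹ • (psqrt A *ᵥ x))) := by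
        rw [mulVec_smul, mulVec_smul, mulVec_mulVec, mulVec_mulVec, hTT, mul_assoc,
          hAp.psqrt_pinv_mul_psqrt hA, ← mulVec_mulVec x (psqrt Ap * B), hxA]
  calc geoMean Bp B Ap *ᵥ x = psqrt Bp *ᵥ (psqrt (Tᴴ * T) *ᵥ (psqrt Bp *ᵥ x)) := by
        rw [hTT', geoMean, mulVec_mulVec, mulVec_mulVec]
    _ = μ⁻¹ • ((psqrt Bp * psqrt B) *ᵥ ((psqrt Ap * psqrt A) *ᵥ x)) := by
        rw [key, hT, mulVec_smul, mulVec_smul, mulVec_mulVec, mulVec_mulVec, mulVec_mulVec]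
        simp only [mul_assoc]
    _ = μ⁻¹ • x := by
        rw [hBp.psqrt_pinv_mul_psqrt hB, hAp.psqrt_pinv_mul_psqrt hA, hxA, hxB]

end GeoMean

theorem supp_le_eigenspace_geoMean_inv_general
    {n : Type*} [Fintype n] [DecidableEq n]
    (A B Ap Bp P : Matrix n n ℂ) (hA : A.PosSemidef) (hB : B.PosSemidef)
    (hAp : IsMPInv A Ap) (hBp : IsMPInv B Bp)
    (hPne : P ≠ 0)
    (lam : ℝ)
    (hPsupp : msupp P ≤ msupp A ⊓ msupp B)
    (hPeig : msupp P ≤ mker (geoMean A Ap B - (lam : ℂ) • (1 : Matrix n n ℂ))) :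
    0 < lam ∧ msupp P ≤ mker (geoMean Bp B Ap - ((lam⁻¹ : ℝ) : ℂ) • (1 : Matrix n n ℂ)) := by
  have hAv {v} (hv : v ∈ msupp P) := hAp.mulVec_ofLp_of_mem_msupp hA.isHermitian (hPsupp hv).1
  have hBv {v} (hv : v ∈ msupp P) := hBp.mulVec_ofLp_of_mem_msupp hB.isHermitian (hPsupp hv).2
  have hGv {v} (hv : v ∈ msupp P) := mem_mker_sub_smul_one_iff.mp (hPeig hv)
  obtain ⟨v, hv, hv0⟩ := exists_mem_msupp_ne_zero hPne
  have hlam : 0 < lam := pos_of_geoMean_mulVec_eq_smul hA hB hAp (hAv hv)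
    (mulVec_ofLp_ne_zero_of_mem_msupp (hPsupp hv).2 hv0) (hGv hv)
  refine ⟨hlam, fun w hw => mem_mker_sub_smul_one_iff.mpr ?_⟩
  rw [Complex.ofReal_inv]
  exact geoMean_mulVec_eq_inv_smul hA hB hAp hBp (by exact_mod_cast hlam.ne') (hAv hw)
    (hBv hw) (hGv hw)

/-- If a nonzero PSD matrix P is supported in supp(A) ∩ supp(B) and in the eigenspace of
M(A,B) with eigenvalue lam, then lam > 0 and P is supported in the eigenspace of
M(B⁺,A⁺) with eigenvalue 1/lam. -/
theorem supp_le_eigenspace_geoMean_inv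
    {n : Type*} [Fintype n] [DecidableEq n]
    (A B Ap Bp P : Matrix n n ℂ) (hA : A.PosSemidef) (hB : B.PosSemidef)
    (hAp : IsMPInv A Ap) (hBp : IsMPInv B Bp)
    (hP : P.PosSemidef) (hPne : P ≠ 0)
    (lam : ℝ)
    (hPsupp : msupp P ≤ msupp A ⊓ msupp B)
    (hPeig : msupp P ≤ mker (geoMean A Ap B - (lam : ℂ) • (1 : Matrix n n ℂ))) :
    0 < lam ∧ msupp P ≤ mker (geoMean Bp B Ap - ((lam⁻¹ : ℝ) : ℂ) • (1 : Matrix n n ℂ)) :=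
  supp_le_eigenspace_geoMean_inv_general A B Ap Bp P hA hB hAp hBp hPne lam hPsupp hPeig
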